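/- For every integer n ≥ 2, the explicit labeling g of the ladder L_n (defined in the context) is sharp ordered on each of the two classes {u_1,...,u_n} and {v_1,...,v_n}: for any two vertices x,y in the same class, g(x) < g(y) implies wt_g(x) < wt_g(y), where wt_g(x)=g(x)+Σ over edges e incident with x of g(e). In particular g is a weak ordered labeling of L_n. -/
import Mathlib


open Sum

/-- The weight of an edge `e` under a total labeling `f` of the graph `G`:
the label of `e` plus the labels of its two endpoints. -/
noncomputable def edgeWt {V : Type*} (G : SimpleGraph V) (f : V ⊕ G.edgeSet → ℕ)
    (e : G.edgeSet) : ℕ :=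
  f (inr e) + ∑ᶠ (v : V) (_ : v ∈ (e : Sym2 V)), f (inl v)

/-- The weight of a vertex `v` under a total labeling `f` of the graph `G`:
the label of `v` plus the labels of all edges incident with `v`. -/
noncomputable def vertexWt {V : Type*} (G : SimpleGraph V) (f : V ⊕ G.edgeSet → ℕ)
    (v : V) : ℕ :=
  f (inl v) + ∑ᶠ (e : G.edgeSet) (_ : v ∈ (e : Sym2 V)), f (inr e)

/-- The ladder `L_n = P_n × P_2`, with vertices `u_i = inl i` and `v_i = inr i`
(`i` running over `Fin n`), edges `u_i u_{i+1}`, `v_i v_{i+1}` and rungs `u_i v_i`. -/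
def ladder (n : ℕ) : SimpleGraph (Fin n ⊕ Fin n) :=
  SimpleGraph.fromRel (fun a b =>
    (∃ p q : Fin n, (p : ℕ) + 1 = (q : ℕ) ∧ a = inl p ∧ b = inl q) ∨
    (∃ p q : Fin n, (p : ℕ) + 1 = (q : ℕ) ∧ a = inr p ∧ b = inr q) ∨
    (∃ p : Fin n, a = inl p ∧ b = inr p))

/-- Labels of the vertices of the ladder `L_n`: for the 1-based index `i = k+1`,
`g(u_i) = 2i-1` if `i ≤ ⌈n/2⌉` and `g(u_i) = 2(n-i+1)` otherwise;
`g(v_i) = n+2i-1` if `i ≤ ⌈n/2⌉` and `g(v_i) = 3n+2(1-i)` otherwise. -/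
def ladderVL (n : ℕ) : Fin n ⊕ Fin n → ℕ
  | inl k => if (k : ℕ) + 1 ≤ (n + 1) / 2 then 2 * (k : ℕ) + 1 else 2 * (n - (k : ℕ))
  | inr k => if (k : ℕ) + 1 ≤ (n + 1) / 2 then n + 2 * (k : ℕ) + 1 else 3 * n - 2 * (k : ℕ)

/-- Labels of the edges of the ladder `L_n`, written as a symmetric function of the two
endpoints.  For the edge `u_i u_{i+1}` (whose smaller endpoint has 0-based index
`k = i - 1`): `g = 3n+2i-1` if `i ≤ ⌊n/2⌋` and `g = 5n-2i` otherwise; for `v_i v_{i+1}`: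
`g = 2(2n+i-1)` if `i ≤ ⌊n/2⌋` and `g = 2(3n-i)-1` otherwise; for the rung `u_i v_i`:
`g = 2(n+i)-1` if `i ≤ ⌈n/2⌉` and `g = 2(2n-i+1)` otherwise. -/
def ladderEL (n : ℕ) : Fin n ⊕ Fin n → Fin n ⊕ Fin n → ℕ
  | inl p, inl q =>
      if min (p : ℕ) (q : ℕ) + 1 ≤ n / 2 then 3 * n + 2 * min (p : ℕ) (q : ℕ) + 1
      else 5 * n - 2 * min (p : ℕ) (q : ℕ) - 2
  | inr p, inr q =>
      if min (p : ℕ) (q : ℕ) + 1 ≤ n / 2 then 4 * n + 2 * min (p : ℕ) (q : ℕ)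
      else 6 * n - 2 * min (p : ℕ) (q : ℕ) - 3
  | inl p, inr _ =>
      if (p : ℕ) + 1 ≤ (n + 1) / 2 then 2 * n + 2 * (p : ℕ) + 1 else 4 * n - 2 * (p : ℕ)
  | inr _, inl q =>
      if (q : ℕ) + 1 ≤ (n + 1) / 2 then 2 * n + 2 * (q : ℕ) + 1 else 4 * n - 2 * (q : ℕ)

lemma ladderEL_comm (n : ℕ) (a b : Fin n ⊕ Fin n) : ladderEL n a b = ladderEL n b a := by
  rcases a with p | p <;> rcases b with q | q <;> simp [ladderEL, Nat.min_comm]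

/-- The explicit super total labeling `g` of the ladder `L_n` from the paper. -/
def ladderLabel (n : ℕ) : (Fin n ⊕ Fin n) ⊕ (ladder n).edgeSet → ℕ :=
  Sum.elim (ladderVL n)
    (fun e => Sym2.lift ⟨ladderEL n, ladderEL_comm n⟩ (e : Sym2 (Fin n ⊕ Fin n)))

/-- For every `n ≥ 2`, the explicit labeling `g` of the ladder `L_n` is sharp ordered on
each of the two classes `{u_1, …, u_n}` and `{v_1, …, v_n}`; in particular `g` is a weak
ordered labeling of `L_n` (these two classes partition the vertex set). -/
-- === auxiliary ===
lemma finsum_cond {α} [Fintype α] (p : α → Prop) [DecidablePred p] (f : α → ℕ) :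
    (∑ᶠ (x : α) (_ : p x), f x) = ∑ x ∈ Finset.univ.filter p, f x := by
  rw [show (∑ᶠ (x : α) (_ : p x), f x) = ∑ᶠ x ∈ {x | p x}, f x from rfl]
  rw [show {x | p x} = ((Finset.univ.filter p : Finset α) : Set α) by ext; simp]
  exact finsum_mem_coe_finset _ _

lemma vertexWt_eq {V : Type*} [Fintype V] [DecidableEq V] (G : SimpleGraph V)
    [DecidableRel G.Adj] (fv : V → ℕ) (h : Sym2 V → ℕ) (v : V) :
    vertexWt G (Sum.elim fv (fun e => h (e : Sym2 V))) v
      = fv v + ∑ w ∈ Finset.univ, (if G.Adj v w then h s(v, w) else 0) := by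
  unfold vertexWt
  congr 1
  rw [finsum_cond, ← Finset.sum_filter]
  refine Finset.sum_bij' (fun e he => Sym2.Mem.other' (by simpa using he))
    (fun w hw => (⟨s(v, w), by simpa using hw⟩ : G.edgeSet)) ?_ ?_ ?_ ?_ ?_
  · intro e he
    simp only [Finset.mem_filter, Finset.mem_univ, true_and] at he ⊢
    have := Sym2.other_spec' he
    have h2 : (↑e : Sym2 V) ∈ G.edgeSet := e.2
    rw [← this] at h2
    exact h2
  · intro w hw
    simp only [Finset.mem_filter, Finset.mem_univ, true_and]
    exact Sym2.mem_mk_left v _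
  · intro e he
    simp only [Finset.mem_filter, Finset.mem_univ, true_and] at he
    apply Subtype.ext
    exact Sym2.other_spec' he
  · intro w hw
    have : v ∈ s(v, w) := Sym2.mem_mk_left v w
    exact Sym2.congr_right.mp (Sym2.other_spec' (by simpa using this))
  · intro e he
    simp only [Finset.mem_filter, Finset.mem_univ, true_and] at he
    simp only [Sum.elim_inr]
    conv_lhs => rw [show (↑e : Sym2 V) = s(v, Sym2.Mem.other' he) from (Sym2.other_spec' he).symm]

lemma ladder_adj_ll (n : ℕ) (i j : Fin n) :
    (ladder n).Adj (inl i) (inl j) ↔ ((i:ℕ)+1 = j ∨ (j:ℕ)+1 = i) := by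
  simp only [ladder, SimpleGraph.fromRel_adj]
  constructor
  · rintro ⟨hne, h | h⟩ <;> aesop
  · intro h
    refine ⟨fun he => by injection he with h'; subst h'; omega, ?_⟩
    rcases h with h | h
    · exact Or.inl (Or.inl ⟨i, j, h, rfl, rfl⟩)
    · exact Or.inr (Or.inl ⟨j, i, h, rfl, rfl⟩)

lemma ladder_adj_rr (n : ℕ) (i j : Fin n) :
    (ladder n).Adj (inr i) (inr j) ↔ ((i:ℕ)+1 = j ∨ (j:ℕ)+1 = i) := by
  simp only [ladder, SimpleGraph.fromRel_adj]
  constructor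
  · rintro ⟨hne, h | h⟩ <;> aesop
  · intro h
    refine ⟨fun he => by injection he with h'; subst h'; omega, ?_⟩
    rcases h with h | h
    · exact Or.inl (Or.inr (Or.inl ⟨i, j, h, rfl, rfl⟩))
    · exact Or.inr (Or.inr (Or.inl ⟨j, i, h, rfl, rfl⟩))

lemma ladder_adj_lr (n : ℕ) (i j : Fin n) :
    (ladder n).Adj (inl i) (inr j) ↔ i = j := by
  simp only [ladder, SimpleGraph.fromRel_adj]
  constructor
  · rintro ⟨hne, h | h⟩ <;> aesop
  · rintro rfl
    exact ⟨by simp, Or.inl (Or.inr (Or.inr ⟨i, rfl, rfl⟩))⟩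

lemma ladder_adj_rl (n : ℕ) (i j : Fin n) :
    (ladder n).Adj (inr i) (inl j) ↔ i = j := by
  rw [SimpleGraph.adj_comm, ladder_adj_lr]; exact eq_comm

lemma sum_fin_ite1 {n : ℕ} (m : ℕ) (c : Fin n → ℕ) :
    (∑ j : Fin n, if (j:ℕ) = m then c j else 0) = if h : m < n then c ⟨m, h⟩ else 0 := by
  split
  case isTrue h =>
    rw [Finset.sum_eq_single_of_mem ⟨m, h⟩ (Finset.mem_univ _)]
    · simp
    · intro b _ hb
      exact if_neg fun hc => hb (Fin.ext (by simpa using hc))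
  case isFalse h =>
    exact Finset.sum_eq_zero fun j _ => if_neg (by have := j.isLt; omega)

lemma sum_fin_ite2 {n : ℕ} (m : ℕ) (c : Fin n → ℕ) :
    (∑ j : Fin n, if (j:ℕ) + 1 = m then c j else 0)
      = if h : 1 ≤ m ∧ m - 1 < n then c ⟨m - 1, h.2⟩ else 0 := by
  have key : ∀ j : Fin n, ((j:ℕ) + 1 = m) ↔ (1 ≤ m ∧ (j:ℕ) = m - 1) := by intro j; omega
  simp only [key, ite_and]
  by_cases h1 : 1 ≤ m
  · simp only [if_pos h1]
    rw [sum_fin_ite1]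
    by_cases h2 : m - 1 < n
    · rw [dif_pos h2, dif_pos ⟨h1, h2⟩]
    · rw [dif_neg h2, dif_neg (by tauto)]
  · simp only [if_neg h1, Finset.sum_const_zero]
    rw [dif_neg (by tauto)]

lemma wt_inl (n : ℕ) (i : Fin n) :
    vertexWt (ladder n) (ladderLabel n) (inl i) =
      ladderVL n (inl i)
      + (((if h : (i:ℕ) + 1 < n then ladderEL n (inl i) (inl ⟨(i:ℕ)+1, h⟩) else 0)
          + (if h : 1 ≤ (i:ℕ) ∧ (i:ℕ) - 1 < n then ladderEL n (inl i) (inl ⟨(i:ℕ)-1, h.2⟩) else 0))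
        + ladderEL n (inl i) (inr i)) := by
  classical
  rw [show ladderLabel n = Sum.elim (ladderVL n)
      (fun e : (ladder n).edgeSet => Sym2.lift ⟨ladderEL n, ladderEL_comm n⟩ (e : Sym2 _)) from rfl, vertexWt_eq]
  congr 1
  rw [Fintype.sum_sum_type]
  congr 1
  · have key : ∀ j : Fin n,
        (if (ladder n).Adj (inl i) (inl j)
          then Sym2.lift ⟨ladderEL n, ladderEL_comm n⟩ s(inl i, inl j) else 0)
        = (if (j:ℕ) = (i:ℕ)+1 then ladderEL n (inl i) (inl j) else 0)
          + (if (j:ℕ)+1 = (i:ℕ) then ladderEL n (inl i) (inl j) else 0) := by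
      intro j
      rw [show Sym2.lift ⟨ladderEL n, ladderEL_comm n⟩ s(inl i, inl j)
          = ladderEL n (inl i) (inl j) from rfl, ladder_adj_ll]
      generalize ladderEL n (inl i) (inl j) = x
      split_ifs <;> omega
    rw [Finset.sum_congr rfl (fun j _ => key j), Finset.sum_add_distrib,
      sum_fin_ite1, sum_fin_ite2]
  · have key : ∀ j : Fin n,
        (if (ladder n).Adj (inl i) (inr j)
          then Sym2.lift ⟨ladderEL n, ladderEL_comm n⟩ s(inl i, inr j) else 0)
        = (if i = j then ladderEL n (inl i) (inr j) else 0) := by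
      intro j
      rw [show Sym2.lift ⟨ladderEL n, ladderEL_comm n⟩ s(inl i, inr j)
          = ladderEL n (inl i) (inr j) from rfl, ladder_adj_lr]
      split_ifs <;> rfl
    rw [Finset.sum_congr rfl (fun j _ => key j), Finset.sum_ite_eq]
    simp

lemma wt_inr (n : ℕ) (i : Fin n) :
    vertexWt (ladder n) (ladderLabel n) (inr i) =
      ladderVL n (inr i)
      + (ladderEL n (inr i) (inl i)
        + ((if h : (i:ℕ) + 1 < n then ladderEL n (inr i) (inr ⟨(i:ℕ)+1, h⟩) else 0)
          + (if h : 1 ≤ (i:ℕ) ∧ (i:ℕ) - 1 < n then ladderEL n (inr i) (inr ⟨(i:ℕ)-1, h.2⟩) else 0))) := by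
  classical
  rw [show ladderLabel n = Sum.elim (ladderVL n)
      (fun e : (ladder n).edgeSet => Sym2.lift ⟨ladderEL n, ladderEL_comm n⟩ (e : Sym2 _)) from rfl, vertexWt_eq]
  congr 1
  rw [Fintype.sum_sum_type]
  congr 1
  · have key : ∀ j : Fin n,
        (if (ladder n).Adj (inr i) (inl j)
          then Sym2.lift ⟨ladderEL n, ladderEL_comm n⟩ s(inr i, inl j) else 0)
        = (if i = j then ladderEL n (inr i) (inl j) else 0) := by
      intro j
      rw [show Sym2.lift ⟨ladderEL n, ladderEL_comm n⟩ s(inr i, inl j)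
          = ladderEL n (inr i) (inl j) from rfl, ladder_adj_rl]
      split_ifs <;> rfl
    rw [Finset.sum_congr rfl (fun j _ => key j), Finset.sum_ite_eq]
    simp
  · have key : ∀ j : Fin n,
        (if (ladder n).Adj (inr i) (inr j)
          then Sym2.lift ⟨ladderEL n, ladderEL_comm n⟩ s(inr i, inr j) else 0)
        = (if (j:ℕ) = (i:ℕ)+1 then ladderEL n (inr i) (inr j) else 0)
          + (if (j:ℕ)+1 = (i:ℕ) then ladderEL n (inr i) (inr j) else 0) := by
      intro j
      rw [show Sym2.lift ⟨ladderEL n, ladderEL_comm n⟩ s(inr i, inr j)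
          = ladderEL n (inr i) (inr j) from rfl, ladder_adj_rr]
      generalize ladderEL n (inr i) (inr j) = x
      split_ifs <;> omega
    rw [Finset.sum_congr rfl (fun j _ => key j), Finset.sum_add_distrib,
      sum_fin_ite1, sum_fin_ite2]


set_option maxHeartbeats 2000000 in
theorem ladderLabel_weak_ordered (n : ℕ) (hn : 2 ≤ n) :
    (∀ i j : Fin n, ladderLabel n (inl (inl i)) < ladderLabel n (inl (inl j)) →
      vertexWt (ladder n) (ladderLabel n) (inl i) <
        vertexWt (ladder n) (ladderLabel n) (inl j)) ∧
    (∀ i j : Fin n, ladderLabel n (inl (inr i)) < ladderLabel n (inl (inr j)) →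
      vertexWt (ladder n) (ladderLabel n) (inr i) <
        vertexWt (ladder n) (ladderLabel n) (inr j)) := by
  constructor <;> intro i j h <;>
    [(rw [wt_inl, wt_inl]); (rw [wt_inr, wt_inr])] <;>
  · simp only [ladderLabel, Sum.elim_inl] at h
    have hi := i.isLt
    have hj := j.isLt
    simp only [ladderVL, ladderEL] at h ⊢
    split_ifs at h ⊢ <;> omega
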